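/- Let A be an m×n real matrix, 1 ≤ k ≤ rank(A), and let A_k be the best rank-k approximation of A with pseudoinverse A_k⁺. Let Ã_k be any m×n matrix and suppose ‖(I − A_k Ã_k⁺) A_k‖_2 = ε ‖A_k‖_2 for some ε > 0. Then there exists b ∈ R^m such that, with x_k = A_k⁺ b and x̃_k = Ã_k⁺ b, one has ‖A x_k − b‖_2 = 0 and ‖A x̃_k − b‖_2 ≥ ε ‖b‖_2. In particular, no multiplicative approximation bound is possible for regression through an approximation Ã_k constructed obliviously to b, and the additive error is at least ε‖b‖_2. -/

import Mathlib

open Matrix MeasureTheory ProbabilityTheory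
open scoped Matrix.Norms.L2Operator

noncomputable section

/-- Euclidean (ℓ²) norm of a vector. -/
def vnorm {m : ℕ} (x : Fin m → ℝ) : ℝ := ‖(WithLp.equiv 2 (Fin m → ℝ)).symm x‖

/-- Helper restoring the removed Mathlib lemma: `Aᵀ * A` is Hermitian for a real matrix `A`. -/
theorem Matrix.isHermitian_transpose_mul_self {m n : ℕ} (A : Matrix (Fin m) (Fin n) ℝ) :
    (Aᵀ * A).IsHermitian := by
  simpa [Matrix.conjTranspose_eq_transpose_of_trivial] using
    Matrix.isHermitian_conjTranspose_mul_self A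

/-- `sval M i` is the `i`-th largest singular value of `M` (0-indexed), i.e. the square root of
the `i`-th largest eigenvalue of `MᵀM`. -/
def sval {m n : ℕ} (M : Matrix (Fin m) (Fin n) ℝ) (i : Fin n) : ℝ :=
  Real.sqrt ((Matrix.isHermitian_transpose_mul_self M).eigenvalues
    (Tuple.sort (Matrix.isHermitian_transpose_mul_self M).eigenvalues i.rev))

/-- `P` is the Moore–Penrose pseudoinverse of `M` (the four Penrose conditions). -/
def IsMoorePenrose {m n : ℕ} (M : Matrix (Fin m) (Fin n) ℝ)
    (P : Matrix (Fin n) (Fin m) ℝ) : Prop :=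
  M * P * M = M ∧ P * M * P = P ∧ (M * P)ᵀ = M * P ∧ (P * M)ᵀ = P * M

/-- Column space of a matrix: the span of its columns. -/
def colSpace {m n : ℕ} (M : Matrix (Fin m) (Fin n) ℝ) : Submodule ℝ (Fin m → ℝ) :=
  Submodule.span ℝ (Set.range Mᵀ)

/-! Take a vector `y` with `‖y‖ ≤ 1` at which `M = (I - A_k Ã_k⁺) A_k` attains its norm and put
`b = A_k y`. Since `A A_k⁺ = U_k U_kᵀ` fixes the range of `A_k`, `b` is solved exactly. The
residual `A Ã_k⁺ b - b` equals `(A - A_k) Ã_k⁺ b - M y`, a difference of vectors in the orthogonal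
ranges of `A - A_k` and `A_k`; by Pythagoras its norm is at least `‖M y‖ = ε ‖A_k‖ ≥ ε ‖b‖`. -/

theorem ContinuousLinearMap.exists_norm_le_one_norm_apply_eq_opNorm {E F : Type*}
    [NormedAddCommGroup E] [NormedSpace ℝ E] [ProperSpace E]
    [NormedAddCommGroup F] [NormedSpace ℝ F] (f : E →L[ℝ] F) :
    ∃ x, ‖x‖ ≤ 1 ∧ ‖f x‖ = ‖f‖ := by
  have hmem := ((isCompact_closedBall (0 : E) 1).image
    (by fun_prop : Continuous fun x => ‖f x‖)).sSup_mem
    ((Metric.nonempty_closedBall.2 zero_le_one).image _)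
  rw [f.sSup_unitClosedBall_eq_norm] at hmem
  obtain ⟨x, hx, hfx⟩ := hmem
  exact ⟨x, mem_closedBall_zero_iff.1 hx, hfx⟩

section vnorm

variable {m n : ℕ}

theorem vnorm_eq_sqrt_dotProduct (x : Fin m → ℝ) : vnorm x = √(x ⬝ᵥ x) := by
  rw [vnorm, EuclideanSpace.norm_eq]
  simp [dotProduct, sq]

theorem vnorm_zero : vnorm (0 : Fin m → ℝ) = 0 := by simp [vnorm]

theorem vnorm_mulVec_le (M : Matrix (Fin m) (Fin n) ℝ) (x : Fin n → ℝ) :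
    vnorm (M *ᵥ x) ≤ ‖M‖ * vnorm x :=
  M.l2_opNorm_mulVec _

theorem exists_vnorm_le_one_vnorm_mulVec_eq_l2_opNorm (M : Matrix (Fin m) (Fin n) ℝ) :
    ∃ x, vnorm x ≤ 1 ∧ vnorm (M *ᵥ x) = ‖M‖ := by
  obtain ⟨x, hx, hMx⟩ := ((Matrix.toEuclideanLin.trans LinearMap.toContinuousLinearMap)
    M).exists_norm_le_one_norm_apply_eq_opNorm
  exact ⟨WithLp.equiv 2 _ x, hx, hMx⟩

theorem vnorm_le_vnorm_sub_of_dotProduct_eq_zero {u v : Fin m → ℝ} (h : u ⬝ᵥ v = 0) :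
    vnorm v ≤ vnorm (u - v) := by
  rw [vnorm_eq_sqrt_dotProduct, vnorm_eq_sqrt_dotProduct]
  gcongr
  have hu : 0 ≤ u ⬝ᵥ u := Finset.sum_nonneg fun i _ => mul_self_nonneg (u i)
  simp only [sub_dotProduct, dotProduct_sub, dotProduct_comm v u, h]
  linarith

end vnorm

namespace Matrix

section CommRing

variable {R : Type*} [CommRing R]

theorem mulVec_dotProduct_mulVec_eq_zero {l m n : Type*} [Fintype l] [Fintype m] [Fintype n]
    {B : Matrix m n R} {C : Matrix m l R} (h : Bᵀ * C = 0) (x : n → R) (z : l → R) :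
    (B *ᵥ x) ⬝ᵥ (C *ᵥ z) = 0 := by
  rw [dotProduct_comm, dotProduct_mulVec, ← mulVec_transpose, mulVec_mulVec, h, zero_mulVec,
    zero_dotProduct]

theorem mul_diagonal_mul_transpose_mul_mul_diagonal_mul_transpose {l m n r : Type*} [Fintype m]
    [Fintype r] [DecidableEq r] (U : Matrix l r R) {V : Matrix m r R} (W : Matrix n r R)
    (hV : Vᵀ * V = 1) (d e : r → R) :
    U * diagonal d * Vᵀ * (V * diagonal e * Wᵀ) = U * diagonal (d * e) * Wᵀ := by
  simp only [Matrix.mul_assoc]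
  rw [← Matrix.mul_assoc Vᵀ, hV, Matrix.one_mul, ← Matrix.mul_assoc (diagonal d),
    diagonal_mul_diagonal]
  rfl

theorem submatrix_castLE_mul_diagonal_mul_transpose {l n ρ k : ℕ} (hkρ : k ≤ ρ)
    (U : Matrix (Fin l) (Fin ρ) R) (W : Matrix (Fin n) (Fin ρ) R) (d : Fin ρ → R) :
    U.submatrix id (Fin.castLE hkρ) * diagonal (fun i => d (Fin.castLE hkρ i)) *
        (W.submatrix id (Fin.castLE hkρ))ᵀ =
      U * diagonal ({i : Fin ρ | (i : ℕ) < k}.indicator d) * Wᵀ := by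
  ext a b
  rw [mul_apply, mul_apply]
  simp only [mul_diagonal, transpose_apply, submatrix_apply, id]
  refine Fintype.sum_of_injective _ (Fin.castLE_injective hkρ) _ _ (fun i hi => ?_) (fun i => ?_)
  · have hik : i ∉ {i : Fin ρ | (i : ℕ) < k} := fun hik => hi ⟨⟨i, hik⟩, rfl⟩
    rw [Set.indicator_of_notMem hik, mul_zero, zero_mul]
  · rw [Set.indicator_of_mem (by simp)]

theorem transpose_indicator_svd_mul_sub_eq_zero {l m r : Type*} [Fintype l] [Fintype r]
    [DecidableEq r] {U : Matrix l r R} (V : Matrix m r R) (hU : Uᵀ * U = 1) (σ : r → R)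
    (s : Set r) :
    (U * diagonal (s.indicator σ) * Vᵀ)ᵀ *
        (U * diagonal σ * Vᵀ - U * diagonal (s.indicator σ) * Vᵀ) = 0 := by
  have hT : (U * diagonal (s.indicator σ) * Vᵀ)ᵀ = V * diagonal (s.indicator σ) * Uᵀ := by
    rw [transpose_mul, transpose_mul, transpose_transpose, diagonal_transpose, Matrix.mul_assoc]
  have hdisj : (s.indicator σ * fun i => σ i - s.indicator σ i) = 0 := by
    funext i
    by_cases hi : i ∈ s <;> simp [hi]
  rw [hT, ← Matrix.sub_mul, ← Matrix.mul_sub, diagonal_sub,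
    mul_diagonal_mul_transpose_mul_mul_diagonal_mul_transpose _ _ hU, hdisj]
  simp

end CommRing

theorem svd_mul_indicator_pinv_mul_indicator_svd {K : Type*} [Field K] {l m r : Type*}
    [Fintype l] [Fintype m] [Fintype r] [DecidableEq r] {U : Matrix l r K} {V : Matrix m r K}
    (hU : Uᵀ * U = 1) (hV : Vᵀ * V = 1) {σ : r → K} (hσ : ∀ i, σ i ≠ 0) (s : Set r) :
    U * diagonal σ * Vᵀ * (V * diagonal (s.indicator σ⁻¹) * Uᵀ) *
        (U * diagonal (s.indicator σ) * Vᵀ) = U * diagonal (s.indicator σ) * Vᵀ := by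
  have hdiag : σ * s.indicator σ⁻¹ * s.indicator σ = s.indicator σ := by
    funext i
    by_cases hi : i ∈ s <;> simp [hi, hσ i]
  rw [mul_diagonal_mul_transpose_mul_mul_diagonal_mul_transpose _ _ hV,
    mul_diagonal_mul_transpose_mul_mul_diagonal_mul_transpose _ _ hU, hdiag]

end Matrix

theorem exists_residual_eq_zero_and_mul_vnorm_le_residual {m n : ℕ}
    {A Ak : Matrix (Fin m) (Fin n) ℝ} {Akp : Matrix (Fin n) (Fin m) ℝ}
    (Atp : Matrix (Fin n) (Fin m) ℝ) (hproj : A * Akp * Ak = Ak) (horth : Akᵀ * (A - Ak) = 0)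
    {ε : ℝ} (hε : 0 ≤ ε) (hyp : ‖(1 - Ak * Atp) * Ak‖ = ε * ‖Ak‖) :
    ∃ b : Fin m → ℝ, vnorm (A *ᵥ (Akp *ᵥ b) - b) = 0 ∧
      ε * vnorm b ≤ vnorm (A *ᵥ (Atp *ᵥ b) - b) := by
  obtain ⟨y, hy, hMy⟩ := exists_vnorm_le_one_vnorm_mulVec_eq_l2_opNorm ((1 - Ak * Atp) * Ak)
  refine ⟨Ak *ᵥ y, ?_, ?_⟩
  · rw [mulVec_mulVec, mulVec_mulVec, hproj, sub_self, vnorm_zero]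
  set w := Atp *ᵥ (Ak *ᵥ y)
  have hb : vnorm (Ak *ᵥ y) ≤ ‖Ak‖ :=
    (vnorm_mulVec_le Ak y).trans (mul_le_of_le_one_right (norm_nonneg _) hy)
  have hMy' : ((1 - Ak * Atp) * Ak) *ᵥ y = Ak *ᵥ (y - w) := by
    rw [Matrix.sub_mul, Matrix.one_mul, Matrix.mul_assoc, sub_mulVec, mulVec_sub, ← mulVec_mulVec,
      ← mulVec_mulVec]
  have hres : A *ᵥ w - Ak *ᵥ y = (A - Ak) *ᵥ w - Ak *ᵥ (y - w) := by
    simp only [sub_mulVec, mulVec_sub]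
    abel
  calc ε * vnorm (Ak *ᵥ y) ≤ ε * ‖Ak‖ := by gcongr
    _ = vnorm (Ak *ᵥ (y - w)) := by rw [← hyp, ← hMy, hMy']
    _ ≤ vnorm (A *ᵥ w - Ak *ᵥ y) := by
        rw [hres]
        refine vnorm_le_vnorm_sub_of_dotProduct_eq_zero ?_
        rw [dotProduct_comm]
        exact mulVec_dotProduct_mulVec_eq_zero horth _ _

theorem stmt_1_general (m n ρ k : ℕ) (hkρ : k ≤ ρ)
    (A : Matrix (Fin m) (Fin n) ℝ)
    (U : Matrix (Fin m) (Fin ρ) ℝ) (V : Matrix (Fin n) (Fin ρ) ℝ) (σ : Fin ρ → ℝ)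
    (hU : Uᵀ * U = 1) (hV : Vᵀ * V = 1)
    (hσpos : ∀ i, 0 < σ i)
    (hA : A = U * Matrix.diagonal σ * Vᵀ)
    (Ak : Matrix (Fin m) (Fin n) ℝ)
    (hAk : Ak = U.submatrix id (Fin.castLE hkρ) *
      Matrix.diagonal (fun i : Fin k => σ (Fin.castLE hkρ i)) *
      (V.submatrix id (Fin.castLE hkρ))ᵀ)
    (Akp : Matrix (Fin n) (Fin m) ℝ)
    (hAkp : Akp = V.submatrix id (Fin.castLE hkρ) *
      Matrix.diagonal (fun i : Fin k => (σ (Fin.castLE hkρ i))⁻¹) *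
      (U.submatrix id (Fin.castLE hkρ))ᵀ)
    (Atp : Matrix (Fin n) (Fin m) ℝ)
    (ε : ℝ) (hε : 0 < ε)
    (hyp : ‖(1 - Ak * Atp) * Ak‖ = ε * ‖Ak‖) :
    ∃ b : Fin m → ℝ,
      vnorm (A.mulVec (Akp.mulVec b) - b) = 0 ∧
      ε * vnorm b ≤ vnorm (A.mulVec (Atp.mulVec b) - b) := by
  rw [submatrix_castLE_mul_diagonal_mul_transpose] at hAk
  replace hAkp := hAkp.trans (submatrix_castLE_mul_diagonal_mul_transpose hkρ V U σ⁻¹)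
  subst hA hAk hAkp
  exact exists_residual_eq_zero_and_mul_vnorm_le_residual Atp
    (svd_mul_indicator_pinv_mul_indicator_svd hU hV (fun i => (hσpos i).ne') _)
    (transpose_indicator_svd_mul_sub_eq_zero V hU σ _) hε.le hyp

/-- lower bound: if `‖(I − A_k Ã_k⁺) A_k‖₂ = ε ‖A_k‖₂` with `ε > 0`, then there is
a `b` with `‖A x_k − b‖₂ = 0` and `‖A x̃_k − b‖₂ ≥ ε ‖b‖₂`, where `x_k = A_k⁺ b` and
`x̃_k = Ã_k⁺ b`.  In particular no multiplicative bound is possible and the additive error is at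
least `ε ‖b‖₂`. -/
theorem stmt_1 (m n ρ k : ℕ) (hk0 : 1 ≤ k) (hkρ : k ≤ ρ)
    (A : Matrix (Fin m) (Fin n) ℝ)
    (U : Matrix (Fin m) (Fin ρ) ℝ) (V : Matrix (Fin n) (Fin ρ) ℝ) (σ : Fin ρ → ℝ)
    (hU : Uᵀ * U = 1) (hV : Vᵀ * V = 1)
    (hσpos : ∀ i, 0 < σ i) (hσmono : ∀ i j : Fin ρ, i ≤ j → σ j ≤ σ i)
    (hA : A = U * Matrix.diagonal σ * Vᵀ) (hrank : A.rank = ρ)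
    (Ak : Matrix (Fin m) (Fin n) ℝ)
    (hAk : Ak = U.submatrix id (Fin.castLE hkρ) *
      Matrix.diagonal (fun i : Fin k => σ (Fin.castLE hkρ i)) *
      (V.submatrix id (Fin.castLE hkρ))ᵀ)
    (Akp : Matrix (Fin n) (Fin m) ℝ)
    (hAkp : Akp = V.submatrix id (Fin.castLE hkρ) *
      Matrix.diagonal (fun i : Fin k => (σ (Fin.castLE hkρ i))⁻¹) *
      (U.submatrix id (Fin.castLE hkρ))ᵀ)
    (At : Matrix (Fin m) (Fin n) ℝ) (Atp : Matrix (Fin n) (Fin m) ℝ)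
    (hAtp : IsMoorePenrose At Atp)
    (ε : ℝ) (hε : 0 < ε)
    (hyp : ‖(1 - Ak * Atp) * Ak‖ = ε * ‖Ak‖) :
    ∃ b : Fin m → ℝ,
      vnorm (A.mulVec (Akp.mulVec b) - b) = 0 ∧
      ε * vnorm b ≤ vnorm (A.mulVec (Atp.mulVec b) - b) :=
  stmt_1_general m n ρ k hkρ A U V σ hU hV hσpos hA Ak hAk Akp hAkp Atp ε hε hyp

end
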